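/- Hölder-type localization of translated kernels: let ĝ : [0, λ_max] → ℝ be a kernel, let g ∈ ℝ^N be the signal with graph Fourier coefficients ĝ(λ_ℓ), fix vertices i and n with d_in := d_G(i,n) ≥ 1, set K := d_in − 1, and let p, q ≥ 1 satisfy 1/p + 1/q = 1. Then for every real polynomial P of degree at most K, |(T_i g)(n)| ≤ √N · μ^{2(q−1)/q} · ( Σ_{ℓ=0}^{N−1} |ĝ(λ_ℓ) − P(λ_ℓ)|^p )^{1/p}. -/

import Mathlib

/-! If `deg P < d(i, n)` then `P(L)` vanishes at `(i, n)`, because `(L ^ k) i n ≠ 0` forces a walk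
of length at most `k` from `i` to `n`. Expanding `P(L)` in the eigenbasis,
`P(L) i n = ∑ ℓ, P(λ_ℓ) χ_ℓ(i) χ_ℓ(n)`, so `(T_i g)(n) = √N ∑ ℓ, (ĝ - P)(λ_ℓ) χ_ℓ(i) χ_ℓ(n)`.
Hölder's inequality bounds this sum by `‖ĝ - P‖_p` times the `q`-norm of
`t_ℓ = |χ_ℓ(i) χ_ℓ(n)|`, and `∑ t_ℓ ^ q ≤ μ^(2(q-1)) ∑ t_ℓ ≤ μ^(2(q-1))` since `t_ℓ ≤ μ²` and,
by AM-GM and orthonormality of the columns of `χ`, `∑ t_ℓ ≤ 1`. -/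

open Finset

/-- Graph Fourier transform: f̂(ℓ) = Σₙ f(n) χ_ℓ(n). -/
noncomputable def gft {N : ℕ} (χ : Fin N → Fin N → ℝ) (f : Fin N → ℝ) (l : Fin N) : ℝ :=
  ∑ n, f n * χ l n

/-- Generalized convolution: (f∗g)(n) = Σ_ℓ f̂(ℓ) ĝ(ℓ) χ_ℓ(n). -/
noncomputable def gconv {N : ℕ} (χ : Fin N → Fin N → ℝ) (f g : Fin N → ℝ) : Fin N → ℝ :=
  fun n => ∑ l, gft χ f l * gft χ g l * χ l n

/-- Generalized translation: (T_i f)(n) = √N Σ_ℓ f̂(ℓ) χ_ℓ(i) χ_ℓ(n). -/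
noncomputable def gtrans {N : ℕ} (χ : Fin N → Fin N → ℝ) (i : Fin N) (f : Fin N → ℝ) : Fin N → ℝ :=
  fun n => Real.sqrt N * ∑ l, gft χ f l * χ l i * χ l n

/-- Generalized modulation: (M_k f)(n) = √N f(n) χ_k(n). -/
noncomputable def gmod {N : ℕ} (χ : Fin N → Fin N → ℝ) (k : Fin N) (f : Fin N → ℝ) : Fin N → ℝ :=
  fun n => Real.sqrt N * f n * χ k n

/-- The simple graph associated to the matrix L: edge between distinct m, n iff L m n ≠ 0. -/
def graphOf {N : ℕ} (L : Matrix (Fin N) (Fin N) ℝ) : SimpleGraph (Fin N) :=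
  SimpleGraph.fromRel fun m n => L m n ≠ 0

/-- The signal on the graph whose graph Fourier coefficients are ĝ(λ_ℓ). -/
noncomputable def kernelSig {N : ℕ} (χ : Fin N → Fin N → ℝ) (lam : Fin N → ℝ)
    (ghat : ℝ → ℝ) : Fin N → ℝ :=
  fun m => ∑ l, ghat (lam l) * χ l m

/-- Windowed graph Fourier atom g_{i,k} = M_k T_i g. -/
noncomputable def wgfAtom {N : ℕ} (χ : Fin N → Fin N → ℝ) (g : Fin N → ℝ)
    (i k : Fin N) : Fin N → ℝ :=
  gmod χ k (gtrans χ i g)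

open Polynomial
open scoped Matrix

section Orthonormal

variable {ι : Type*} [Fintype ι] [DecidableEq ι] {χ : ι → ι → ℝ}

theorem sum_apply_mul_apply_eq_ite_of_orthonormal
    (horth : ∀ l l' : ι, ∑ n, χ l n * χ l' n = if l = l' then (1 : ℝ) else 0) (m n : ι) :
    ∑ l, χ l m * χ l n = if m = n then (1 : ℝ) else 0 := by
  have hrows : (Matrix.of χ * (Matrix.of χ)ᵀ : Matrix ι ι ℝ) = 1 := by
    ext l l'
    simp [Matrix.mul_apply, horth l l', Matrix.one_apply]
  have hcols := mul_eq_one_comm.mp hrows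
  simpa [Matrix.mul_apply, Matrix.one_apply] using congrFun₂ hcols m n

theorem Matrix.apply_eq_sum_mulVec_mul
    (horth : ∀ l l' : ι, ∑ n, χ l n * χ l' n = if l = l' then (1 : ℝ) else 0)
    (A : Matrix ι ι ℝ) (m n : ι) : A m n = ∑ l, (A *ᵥ χ l) m * χ l n := by
  simp only [Matrix.mulVec, dotProduct, Finset.sum_mul, mul_assoc]
  rw [Finset.sum_comm]
  simp [← Finset.mul_sum, sum_apply_mul_apply_eq_ite_of_orthonormal horth]

end Orthonormal

section Spectral

variable {ι : Type*} [Fintype ι] [DecidableEq ι]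

theorem Matrix.pow_mulVec_of_mulVec_eq_smul {A : Matrix ι ι ℝ} {v : ι → ℝ} {c : ℝ}
    (h : A *ᵥ v = c • v) (k : ℕ) : (A ^ k) *ᵥ v = c ^ k • v := by
  induction k with
  | zero => simp
  | succ k ih =>
    rw [pow_succ', ← Matrix.mulVec_mulVec, ih, Matrix.mulVec_smul, h, smul_smul, pow_succ]

theorem Matrix.aeval_mulVec_of_mulVec_eq_smul {A : Matrix ι ι ℝ} {v : ι → ℝ} {c : ℝ}
    (h : A *ᵥ v = c • v) (P : ℝ[X]) : aeval A P *ᵥ v = P.eval c • v := by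
  induction P using Polynomial.induction_on' with
  | add P Q hP hQ => simp [Matrix.add_mulVec, hP, hQ, add_smul]
  | monomial k a =>
    simp [Algebra.algebraMap_eq_smul_one, Matrix.smul_mulVec,
      Matrix.pow_mulVec_of_mulVec_eq_smul h, smul_smul]

theorem Matrix.aeval_apply_eq_sum_eval {L : Matrix ι ι ℝ} {χ : ι → ι → ℝ} {lam : ι → ℝ}
    (horth : ∀ l l' : ι, ∑ n, χ l n * χ l' n = if l = l' then (1 : ℝ) else 0)
    (heig : ∀ l : ι, L *ᵥ χ l = lam l • χ l) (P : ℝ[X]) (m n : ι) :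
    aeval L P m n = ∑ l, P.eval (lam l) * (χ l m * χ l n) := by
  rw [Matrix.apply_eq_sum_mulVec_mul horth (aeval L P)]
  simp [Matrix.aeval_mulVec_of_mulVec_eq_smul (heig _), mul_assoc]

end Spectral

section Locality

variable {N : ℕ} (L : Matrix (Fin N) (Fin N) ℝ)

theorem exists_walk_length_le_of_pow_apply_ne_zero {k : ℕ} {m n : Fin N}
    (h : (L ^ k) m n ≠ 0) : ∃ w : (graphOf L).Walk m n, w.length ≤ k := by
  induction k generalizing m with
  | zero =>
    obtain rfl : m = n := by
      by_contra hmn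
      simp [hmn] at h
    exact ⟨.nil, le_rfl⟩
  | succ k ih =>
    rw [pow_succ', Matrix.mul_apply] at h
    obtain ⟨j, -, hj⟩ := Finset.exists_ne_zero_of_sum_ne_zero h
    obtain ⟨w, hw⟩ := ih (right_ne_zero_of_mul hj)
    by_cases hmj : m = j
    · subst hmj
      exact ⟨w, hw.trans k.le_succ⟩
    · have hadj : (graphOf L).Adj m j := by
        simp [graphOf, hmj, left_ne_zero_of_mul hj]
      exact ⟨.cons hadj w, by simpa using hw⟩

theorem pow_apply_eq_zero_of_lt_dist {k : ℕ} {m n : Fin N} (hk : k < (graphOf L).dist m n) :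
    (L ^ k) m n = 0 := by
  by_contra h
  obtain ⟨w, hw⟩ := exists_walk_length_le_of_pow_apply_ne_zero L h
  exact (SimpleGraph.dist_le w).trans hw |>.not_gt hk

theorem aeval_apply_eq_zero_of_natDegree_lt_dist {P : ℝ[X]} {m n : Fin N}
    (hP : P.natDegree < (graphOf L).dist m n) : aeval L P m n = 0 := by
  rw [aeval_eq_sum_range, Matrix.sum_apply]
  refine Finset.sum_eq_zero fun k hk => ?_
  rw [Matrix.smul_apply, pow_apply_eq_zero_of_lt_dist L, smul_zero]
  exact (Finset.mem_range_succ_iff.mp hk).trans_lt hP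

end Locality

section Kernel

variable {N : ℕ} {χ : Fin N → Fin N → ℝ}

theorem gft_kernelSig
    (horth : ∀ l l' : Fin N, ∑ n, χ l n * χ l' n = if l = l' then (1 : ℝ) else 0)
    (lam : Fin N → ℝ) (ghat : ℝ → ℝ) (l : Fin N) :
    gft χ (kernelSig χ lam ghat) l = ghat (lam l) := by
  simp only [gft, kernelSig, Finset.sum_mul, mul_assoc]
  rw [Finset.sum_comm]
  simp [← Finset.mul_sum, horth]

theorem gtrans_kernelSig_apply_eq_sum_sub {L : Matrix (Fin N) (Fin N) ℝ} {lam : Fin N → ℝ}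
    (horth : ∀ l l' : Fin N, ∑ n, χ l n * χ l' n = if l = l' then (1 : ℝ) else 0)
    (heig : ∀ l : Fin N, L *ᵥ χ l = lam l • χ l) (ghat : ℝ → ℝ) {P : ℝ[X]} {i n : Fin N}
    (hP : P.natDegree < (graphOf L).dist i n) :
    gtrans χ i (kernelSig χ lam ghat) n =
      Real.sqrt N * ∑ l, (ghat (lam l) - P.eval (lam l)) * (χ l i * χ l n) := by
  have hzero : ∑ l, P.eval (lam l) * (χ l i * χ l n) = 0 := by
    rw [← Matrix.aeval_apply_eq_sum_eval horth heig,
      aeval_apply_eq_zero_of_natDegree_lt_dist L hP]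
  simp only [gtrans, gft_kernelSig horth, sub_mul, Finset.sum_sub_distrib, hzero, sub_zero,
    mul_assoc]

end Kernel

section Holder

variable {ι : Type*} [Fintype ι]

theorem sum_abs_mul_le_one {u v : ι → ℝ} (hu : ∑ l, u l ^ 2 ≤ 1) (hv : ∑ l, v l ^ 2 ≤ 1) :
    ∑ l, |u l * v l| ≤ 1 := by
  have hamgm : ∀ l, |u l * v l| ≤ (u l ^ 2 + v l ^ 2) / 2 := fun l => by
    rw [abs_mul, ← sq_abs (u l), ← sq_abs (v l)]
    linarith [two_mul_le_add_sq |u l| |v l|]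
  calc ∑ l, |u l * v l| ≤ ∑ l, (u l ^ 2 + v l ^ 2) / 2 := Finset.sum_le_sum fun l _ => hamgm l
    _ = ((∑ l, u l ^ 2) + ∑ l, v l ^ 2) / 2 := by rw [← Finset.sum_div, Finset.sum_add_distrib]
    _ ≤ 1 := by linarith

theorem sum_rpow_le_rpow_sub_one {t : ι → ℝ} {M q : ℝ} (ht : ∀ l, 0 ≤ t l) (htM : ∀ l, t l ≤ M)
    (hM : 0 ≤ M) (hsum : ∑ l, t l ≤ 1) (hq : 1 ≤ q) : ∑ l, t l ^ q ≤ M ^ (q - 1) := by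
  have hpow : ∀ l, t l ^ q ≤ M ^ (q - 1) * t l := fun l => by
    calc t l ^ q = t l ^ (q - 1) * t l := by
          rw [← Real.rpow_add_one' (ht l) (by linarith), sub_add_cancel]
      _ ≤ M ^ (q - 1) * t l :=
          mul_le_mul_of_nonneg_right (Real.rpow_le_rpow (ht l) (htM l) (by linarith)) (ht l)
  calc ∑ l, t l ^ q ≤ ∑ l, M ^ (q - 1) * t l := Finset.sum_le_sum fun l _ => hpow l
    _ = M ^ (q - 1) * ∑ l, t l := by rw [Finset.mul_sum]
    _ ≤ M ^ (q - 1) := mul_le_of_le_one_right (by positivity) hsum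

theorem abs_sum_mul_mul_le_of_sum_sq_le_one {p q μ : ℝ} (hpq : p.HolderConjugate q) (a : ι → ℝ)
    {u v : ι → ℝ} (hu : ∑ l, u l ^ 2 ≤ 1) (hv : ∑ l, v l ^ 2 ≤ 1) (hμ : 0 ≤ μ)
    (huμ : ∀ l, |u l| ≤ μ) (hvμ : ∀ l, |v l| ≤ μ) :
    |∑ l, a l * (u l * v l)| ≤ μ ^ (2 * (q - 1) / q) * (∑ l, |a l| ^ p) ^ (1 / p) := by
  have hq := hpq.symm.lt
  have htail : ∑ l, |u l * v l| ^ q ≤ (μ ^ (2 : ℝ)) ^ (q - 1) := by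
    refine sum_rpow_le_rpow_sub_one (fun l => abs_nonneg _) (fun l => ?_) (by positivity)
      (sum_abs_mul_le_one hu hv) hq.le
    rw [abs_mul, Real.rpow_two, sq]
    exact mul_le_mul (huμ l) (hvμ l) (abs_nonneg _) hμ
  calc |∑ l, a l * (u l * v l)|
      ≤ ∑ l, |a l| * |u l * v l| := by
        simpa only [abs_mul] using Finset.abs_sum_le_sum_abs (fun l => a l * (u l * v l)) univ
    _ ≤ (∑ l, |a l| ^ p) ^ (1 / p) * (∑ l, |u l * v l| ^ q) ^ (1 / q) := by
      simpa only [abs_abs] using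
        Real.inner_le_Lp_mul_Lq Finset.univ (fun l => |a l|) (fun l => |u l * v l|) hpq
    _ ≤ (∑ l, |a l| ^ p) ^ (1 / p) * ((μ ^ (2 : ℝ)) ^ (q - 1)) ^ (1 / q) := by gcongr
    _ = μ ^ (2 * (q - 1) / q) * (∑ l, |a l| ^ p) ^ (1 / p) := by
      rw [← Real.rpow_mul hμ, ← Real.rpow_mul hμ, mul_one_div, mul_comm]

end Holder

theorem translated_kernel_localization_holder_general
    (N : ℕ) (L : Matrix (Fin N) (Fin N) ℝ)
    (χ : Fin N → Fin N → ℝ) (lam : Fin N → ℝ)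
    (horth : ∀ l l' : Fin N, ∑ n, χ l n * χ l' n = if l = l' then (1 : ℝ) else 0)
    (heig : ∀ l : Fin N, L.mulVec (χ l) = lam l • χ l)
    (μ : ℝ) (hμ : IsGreatest {x : ℝ | ∃ l j : Fin N, x = |χ l j|} μ)
    (ghat : ℝ → ℝ) (i n : Fin N)
    (hd : 1 ≤ (graphOf L).dist i n)
    (p q : ℝ) (hp : 1 ≤ p) (hq : 1 ≤ q) (hpq : 1 / p + 1 / q = 1)
    (P : Polynomial ℝ) (hdeg : P.natDegree ≤ (graphOf L).dist i n - 1) :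
    |gtrans χ i (kernelSig χ lam ghat) n| ≤
      Real.sqrt N * μ ^ (2 * (q - 1) / q) *
        (∑ l, |ghat (lam l) - P.eval (lam l)| ^ p) ^ (1 / p) := by
  have hholder : p.HolderConjugate q :=
    ⟨by simpa only [one_div, inv_one] using hpq, by linarith, by linarith⟩
  have hμ0 : 0 ≤ μ := by
    obtain ⟨l, j, rfl⟩ := hμ.1
    exact abs_nonneg _
  have hχμ : ∀ l j, |χ l j| ≤ μ := fun l j => hμ.2 ⟨l, j, rfl⟩
  have hcol : ∀ j, ∑ l, χ l j ^ 2 ≤ 1 := fun j => by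
    simp [sq, sum_apply_mul_apply_eq_ite_of_orthonormal horth j j]
  rw [gtrans_kernelSig_apply_eq_sum_sub horth heig ghat (show P.natDegree < _ by omega), abs_mul,
    abs_of_nonneg (Real.sqrt_nonneg _), mul_assoc]
  gcongr
  exact abs_sum_mul_mul_le_of_sum_sq_le_one hholder _ (hcol i) (hcol n) hμ0 (fun l => hχμ l i)
    (fun l => hχμ l n)

/-- Hölder-type localization of translated kernels: with
K = d_G(i,n) − 1 and conjugate exponents p, q ≥ 1 (1/p + 1/q = 1), for every
polynomial P of degree at most K,
|(T_i g)(n)| ≤ √N · μ^{2(q−1)/q} · (Σ_ℓ |ĝ(λ_ℓ) − P(λ_ℓ)|^p)^{1/p}. -/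
theorem translated_kernel_localization_holder
    (N : ℕ) (hN : 0 < N) (L : Matrix (Fin N) (Fin N) ℝ) (hL : L.IsSymm)
    (χ : Fin N → Fin N → ℝ) (lam : Fin N → ℝ)
    (horth : ∀ l l' : Fin N, ∑ n, χ l n * χ l' n = if l = l' then (1 : ℝ) else 0)
    (heig : ∀ l : Fin N, L.mulVec (χ l) = lam l • χ l)
    (lammax : ℝ) (hlam : ∀ l, lam l ∈ Set.Icc (0 : ℝ) lammax)
    (μ : ℝ) (hμ : IsGreatest {x : ℝ | ∃ l j : Fin N, x = |χ l j|} μ)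
    (ghat : ℝ → ℝ) (i n : Fin N)
    (hd : 1 ≤ (graphOf L).dist i n)
    (p q : ℝ) (hp : 1 ≤ p) (hq : 1 ≤ q) (hpq : 1 / p + 1 / q = 1)
    (P : Polynomial ℝ) (hdeg : P.natDegree ≤ (graphOf L).dist i n - 1) :
    |gtrans χ i (kernelSig χ lam ghat) n| ≤
      Real.sqrt N * μ ^ (2 * (q - 1) / q) *
        (∑ l, |ghat (lam l) - P.eval (lam l)| ^ p) ^ (1 / p) :=
  translated_kernel_localization_holder_general N L χ lam horth heig μ hμ ghat i n hd p q hp hq hpq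
    P hdeg
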